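/- arXiv:2605.10754 — 7 statements merged into one kernel-verified Lean document; each statement's English description precedes it below -/
import Mathlib

section
/- Let D, R be finite nonempty types and O a type, and let T : D → R → O be an outcome map such that for every regulator response r : R the map d ↦ T d r is injective. Then for every regulation strategy ρ : D → R and every outcome o : O, the set of disturbances d with T d (ρ d) = o has cardinality at most Nat.card R. -/
/-- Ashby regulation model: if for every regulator response `r` the map
`d ↦ T d r` is injective, then for any strategy `ρ` and outcome `o`, the set
of disturbances mapped to `o` has cardinality at most `Nat.card R`. -/
theorem regulated_fiber_card_le
    (D R O : Type*) [Fintype D] [Nonempty D] [Fintype R] [Nonempty R]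
    (T : D → R → O) (hT : ∀ r : R, Function.Injective (fun d => T d r))
    (ρ : D → R) (o : O) :
    Nat.card {d : D // T d (ρ d) = o} ≤ Nat.card R := by
  have hinj : Function.Injective (fun d : {d : D // T d (ρ d) = o} => ρ d.1) := by
    rintro ⟨d1, h1⟩ ⟨d2, h2⟩ h
    simp only at h
    have : T d1 (ρ d1) = T d2 (ρ d1) := by rw [h1, h, h2]
    exact Subtype.ext (hT (ρ d1) this)
  exact Nat.card_le_card_of_injective _ hinj
end

section
/- Let D, R be finite nonempty types and O a type, and let T : D → R → O be an outcome map such that for every regulator response r : R the map d ↦ T d r is injective. Then for every regulation strategy ρ : D → R, the regulated output set E' = {T d (ρ d) | d ∈ D} satisfies Nat.card R * Nat.card E' ≥ Nat.card D. -/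
/-- Ashby regulation model: for any strategy `ρ`, the regulated output set
`E' = {T d (ρ d) | d : D}` satisfies `card R * card E' ≥ card D`. -/
theorem card_regulator_mul_card_output_ge
    (D R O : Type*) [Fintype D] [Nonempty D] [Fintype R] [Nonempty R]
    (T : D → R → O) (hT : ∀ r : R, Function.Injective (fun d => T d r))
    (ρ : D → R) :
    Nat.card R * Nat.card (Set.range (fun d => T d (ρ d))) ≥ Nat.card D := by
  have hf : Function.Injective
      (fun d : D => ((ρ d, ⟨T d (ρ d), Set.mem_range_self d⟩) :
        R × (Set.range (fun d => T d (ρ d))))) := by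
    intro a b h
    simp only [Prod.mk.injEq, Subtype.mk.injEq] at h
    obtain ⟨h1, h2⟩ := h
    exact hT (ρ a) (by simpa [h1] using h2)
  calc Nat.card D ≤ Nat.card (R × (Set.range (fun d => T d (ρ d)))) :=
        Nat.card_le_card_of_injective _ hf
    _ = Nat.card R * Nat.card (Set.range (fun d => T d (ρ d))) := Nat.card_prod _ _
end

section
/- (Law of Requisite Variety, residual-variety form.) Let D, R be finite nonempty types and O a type, and let T : D → R → O be an outcome map such that for every regulator response r : R the map d ↦ T d r is injective. Then for every regulation strategy ρ : D → R, the regulated output set E' = {T d (ρ d) | d ∈ D} satisfies V(E') ≥ V(D) − V(R), i.e. Real.log (Nat.card E') ≥ Real.log (Nat.card D) − Real.log (Nat.card R). -/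
/-- Law of Requisite Variety, residual-variety form:
`V(E') ≥ V(D) − V(R)` where `V(S) = Real.log (Nat.card S)`. -/
theorem requisite_variety_residual
    (D R O : Type*) [Fintype D] [Nonempty D] [Fintype R] [Nonempty R]
    (T : D → R → O) (hT : ∀ r : R, Function.Injective (fun d => T d r))
    (ρ : D → R) :
    Real.log (Nat.card (Set.range (fun d => T d (ρ d)))) ≥
      Real.log (Nat.card D) - Real.log (Nat.card R) := by
  set E : Set O := Set.range (fun d => T d (ρ d)) with hE
  haveI : Finite E := Set.finite_range _
  have hinj : Function.Injective
      (fun d : D => ((⟨T d (ρ d), Set.mem_range_self d⟩ : E), ρ d)) := by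
    intro d d' h
    have h1 : T d (ρ d) = T d' (ρ d') := congrArg Subtype.val (congrArg Prod.fst h)
    have h2 : ρ d = ρ d' := congrArg Prod.snd h
    exact hT (ρ d') (by simpa [h2] using h1)
  have hcard : Nat.card D ≤ Nat.card E * Nat.card R := by
    simpa [Nat.card_prod] using Nat.card_le_card_of_injective _ hinj
  have hD : (1 : ℝ) ≤ (Nat.card D : ℝ) := by
    exact_mod_cast Nat.one_le_iff_ne_zero.mpr (Nat.card_ne_zero.mpr ⟨‹_›, inferInstance⟩)
  have hR : (0 : ℝ) < (Nat.card R : ℝ) := by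
    exact_mod_cast Nat.pos_of_ne_zero (Nat.card_ne_zero.mpr ⟨‹_›, inferInstance⟩)
  have hEpos : (0 : ℝ) < (Nat.card E : ℝ) := by
    have : Nonempty E := ⟨⟨T Classical.ofNonempty (ρ Classical.ofNonempty),
      Set.mem_range_self _⟩⟩
    exact_mod_cast Nat.pos_of_ne_zero (Nat.card_ne_zero.mpr ⟨this, inferInstance⟩)
  have hmul : (Nat.card D : ℝ) ≤ (Nat.card E : ℝ) * (Nat.card R : ℝ) := by
    exact_mod_cast hcard
  have := Real.log_le_log (by linarith) hmul
  rw [Real.log_mul (ne_of_gt hEpos) (ne_of_gt hR)] at this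
  linarith
end

section
/- (Law of Requisite Variety, complete-control form.) Let D, R be finite nonempty types and O a type, and let T : D → R → O be an outcome map such that for every regulator response r : R the map d ↦ T d r is injective. If there exist a regulation strategy ρ : D → R and a single target outcome o₀ : O with T d (ρ d) = o₀ for every disturbance d (complete control), then Nat.card R ≥ Nat.card D; equivalently, V(R) ≥ V(D). -/
/-- Law of Requisite Variety, complete-control form: if some strategy drives
every disturbance to a single target outcome, then `card R ≥ card D`;
equivalently `V(R) ≥ V(D)`. -/
theorem requisite_variety_complete_control
    (D R O : Type*) [Fintype D] [Nonempty D] [Fintype R] [Nonempty R]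
    (T : D → R → O) (hT : ∀ r : R, Function.Injective (fun d => T d r))
    (h : ∃ (ρ : D → R) (o₀ : O), ∀ d : D, T d (ρ d) = o₀) :
    Nat.card R ≥ Nat.card D ∧
      Real.log (Nat.card R) ≥ Real.log (Nat.card D) := by
  obtain ⟨ρ, o₀, hρ⟩ := h
  have hinj : Function.Injective ρ := by
    intro d₁ d₂ hd
    apply hT (ρ d₂)
    show T d₁ (ρ d₂) = T d₂ (ρ d₂)
    rw [← hd, hρ d₁, hd, hρ d₂]
  have hcard : Nat.card D ≤ Nat.card R := Nat.card_le_card_of_injective ρ hinj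
  exact ⟨hcard, Real.log_le_log (by exact_mod_cast Nat.card_pos) (by exact_mod_cast hcard)⟩
end

section
/- (Law of Requisite Variety, goal-set form.) Let D, R be finite nonempty types and O a type, and let T : D → R → O be an outcome map such that for every regulator response r : R the map d ↦ T d r is injective. If G is a finite set of acceptable outcomes and ρ : D → R is a regulation strategy with T d (ρ d) ∈ G for every disturbance d, then Nat.card R * Nat.card G ≥ Nat.card D. -/
/-- Law of Requisite Variety, goal-set form: if a strategy keeps every
regulated outcome inside a finite goal set `G`, then
`card R * card G ≥ card D`. -/
theorem requisite_variety_goal_set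
    (D R O : Type*) [Fintype D] [Nonempty D] [Fintype R] [Nonempty R]
    (T : D → R → O) (hT : ∀ r : R, Function.Injective (fun d => T d r))
    (G : Finset O) (ρ : D → R) (hρ : ∀ d : D, T d (ρ d) ∈ G) :
    Nat.card R * G.card ≥ Nat.card D := by
  have hinj : Function.Injective (fun d : D => ((ρ d, ⟨T d (ρ d), hρ d⟩) : R × {x // x ∈ G})) := by
    intro a b hab
    have h1 : ρ a = ρ b := congrArg Prod.fst hab
    have h2 : T a (ρ a) = T b (ρ b) := congrArg (fun p => (p.2 : O)) hab
    rw [h1] at h2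
    exact hT (ρ b) h2
  have := Fintype.card_le_of_injective _ hinj
  simp only [Nat.card_eq_fintype_card]
  calc Fintype.card D ≤ Fintype.card (R × {x // x ∈ G}) := this
    _ = Fintype.card R * G.card := by simp [Fintype.card_prod]
end

section
/- (Entropy lower bound on regulated output; H(output) ≥ H(E) − C_channel.) Let X : Ω → D and U : Ω → R be random variables on a probability space (Ω, P) taking values in finite nonempty types D and R, and let g : D → R → O map into a finite type O with x ↦ g x u injective for every u : R. Then the output Y = (ω ↦ g (X ω) (U ω)) satisfies H(Y) ≥ H(X) − I(X : U). In particular, if the corrective information rate is bounded by a channel capacity C, i.e. I(X : U) ≤ C, then H(Y) ≥ H(X) − C. -/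
open MeasureTheory

/-- Shannon entropy `H(X)` of a finitely-valued random variable `X` under `P`. -/
noncomputable def entropy {Ω S : Type*} [MeasurableSpace Ω] [Fintype S]
    (P : Measure Ω) (X : Ω → S) : ℝ :=
  ∑ s : S, Real.negMulLog (P (X ⁻¹' {s})).toReal

/-- Conditional Shannon entropy `H(X | U)` via the chain rule
`H(X | U) = H(X, U) − H(U)`. -/
noncomputable def condEntropy {Ω S T : Type*} [MeasurableSpace Ω]
    [Fintype S] [Fintype T] (P : Measure Ω) (X : Ω → S) (U : Ω → T) : ℝ :=
  entropy P (fun ω => (X ω, U ω)) - entropy P U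

/-- Mutual information `I(X : U) = H(X) + H(U) − H(X, U)`. -/
noncomputable def mutualInfo {Ω S T : Type*} [MeasurableSpace Ω]
    [Fintype S] [Fintype T] (P : Measure Ω) (X : Ω → S) (U : Ω → T) : ℝ :=
  entropy P X + entropy P U - entropy P (fun ω => (X ω, U ω))

/-!
Relabelling `(x, u) ↦ (g x u, u)` is injective, so the pair `(Y, U)` carries exactly the
information of `(X, U)`: `H(Y, U) = H(X, U)`. Subadditivity `H(Y, U) ≤ H(Y) + H(U)`, which is
Gibbs' inequality for the joint law against the product of its marginals, then gives
`H(Y) ≥ H(X, U) - H(U) = H(X) - I(X : U)`.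
-/

open MeasureTheory Real

namespace Real

lemma negMulLog_le_neg_mul_log_add_sub {r b : ℝ} (hr : 0 ≤ r) (hb : 0 < b) :
    negMulLog r ≤ -(r * log b) + (b - r) := by
  have hsplit : negMulLog r = -(r * log b) + b * negMulLog (r / b) := by
    conv_lhs => rw [← mul_div_cancel₀ r hb.ne']
    rw [negMulLog_mul, negMulLog]
    field_simp
  have hbound := mul_le_mul_of_nonneg_left (negMulLog_le_one_sub_self (div_nonneg hr hb.le)) hb.le
  rw [mul_one_sub, mul_div_cancel₀ r hb.ne'] at hbound
  linarith

theorem sum_negMulLog_le_sum_neg_mul_log {ι : Type*} [Fintype ι] {p q : ι → ℝ}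
    (hp : ∀ i, 0 ≤ p i) (hq : ∀ i, 0 ≤ q i) (hpq : ∀ i, 0 < p i → 0 < q i)
    (hsum : ∑ i, q i ≤ ∑ i, p i) :
    ∑ i, negMulLog (p i) ≤ ∑ i, -(p i * log (q i)) := by
  have hterm : ∀ i, negMulLog (p i) ≤ -(p i * log (q i)) + (q i - p i) := by
    intro i
    rcases (hp i).eq_or_lt with h | h
    · simp [← h, hq i]
    · exact negMulLog_le_neg_mul_log_add_sub (hp i) (hpq i h)
  calc ∑ i, negMulLog (p i) ≤ ∑ i, (-(p i * log (q i)) + (q i - p i)) :=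
        Finset.sum_le_sum fun i _ => hterm i
    _ ≤ ∑ i, -(p i * log (q i)) := by
        rw [Finset.sum_add_distrib, Finset.sum_sub_distrib]
        linarith

end Real

section Marginals

variable {S T : Type*} [Fintype S] [Fintype T]

lemma sum_neg_mul_log_fst_marginal (r : S × T → ℝ) :
    ∑ x, -(r x * log (∑ t, r (x.1, t))) = ∑ s, negMulLog (∑ t, r (s, t)) := by
  simp only [Fintype.sum_prod_type, negMulLog, neg_mul, Finset.sum_neg_distrib, Finset.sum_mul]

lemma sum_neg_mul_log_snd_marginal (r : S × T → ℝ) :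
    ∑ x, -(r x * log (∑ s, r (s, x.2))) = ∑ t, negMulLog (∑ s, r (s, t)) := by
  simp only [Fintype.sum_prod_type_right, negMulLog, neg_mul, Finset.sum_neg_distrib,
    Finset.sum_mul]

theorem sum_negMulLog_le_sum_negMulLog_fst_add_snd {r : S × T → ℝ} (hr : ∀ x, 0 ≤ r x)
    (hsum : ∑ x, r x = 1) :
    ∑ x, negMulLog (r x) ≤ ∑ s, negMulLog (∑ t, r (s, t)) + ∑ t, negMulLog (∑ s, r (s, t)) := by
  set p : S → ℝ := fun s => ∑ t, r (s, t)
  set q : T → ℝ := fun t => ∑ s, r (s, t)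
  have hrp (x : S × T) : r x ≤ p x.1 :=
    Finset.single_le_sum (f := fun t => r (x.1, t)) (fun t _ => hr _) (Finset.mem_univ x.2)
  have hrq (x : S × T) : r x ≤ q x.2 :=
    Finset.single_le_sum (f := fun s => r (s, x.2)) (fun s _ => hr _) (Finset.mem_univ x.1)
  have hp : ∑ s, p s = 1 := by rw [← hsum, Fintype.sum_prod_type]
  have hq : ∑ t, q t = 1 := by rw [← hsum, Fintype.sum_prod_type_right]
  have hgibbs := sum_negMulLog_le_sum_neg_mul_log (q := fun x => p x.1 * q x.2) hr
    (fun x => mul_nonneg ((hr x).trans (hrp x)) ((hr x).trans (hrq x)))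
    (fun x hx => mul_pos (hx.trans_le (hrp x)) (hx.trans_le (hrq x)))
    (by rw [Fintype.sum_prod_type, ← Finset.sum_mul_sum, hp, hq, hsum, one_mul])
  have hcross (x : S × T) :
      -(r x * log (p x.1 * q x.2)) = -(r x * log (p x.1)) + -(r x * log (q x.2)) := by
    rcases (hr x).eq_or_lt with h | h
    · simp [← h]
    · rw [log_mul (h.trans_le (hrp x)).ne' (h.trans_le (hrq x)).ne']
      ring
  calc ∑ x, negMulLog (r x) ≤ ∑ x, -(r x * log (p x.1 * q x.2)) := hgibbs
    _ = ∑ x, -(r x * log (p x.1)) + ∑ x, -(r x * log (q x.2)) := by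
        simp only [hcross, Finset.sum_add_distrib]
    _ = ∑ s, negMulLog (p s) + ∑ t, negMulLog (q t) :=
        congrArg₂ (· + ·) (sum_neg_mul_log_fst_marginal r) (sum_neg_mul_log_snd_marginal r)

end Marginals

section Entropy

variable {Ω S T : Type*} [MeasurableSpace Ω] [Fintype S] [Fintype T] (P : Measure Ω)

lemma entropy_comp_of_injective (Z : Ω → S) {f : S → T} (hf : Function.Injective f) :
    entropy P (fun ω => f (Z ω)) = entropy P Z := by
  refine (Fintype.sum_of_injective f hf _ _ (fun t ht => ?_) (fun s => ?_)).symm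
  · have : (fun ω => f (Z ω)) ⁻¹' {t} = ∅ :=
      Set.eq_empty_of_forall_notMem fun ω hω => ht ⟨Z ω, hω⟩
    simp [this]
  · have : (fun ω => f (Z ω)) ⁻¹' {f s} = Z ⁻¹' {s} := by ext ω; simp [hf.eq_iff]
    rw [this]

lemma measureReal_eq_sum_inter_preimage [IsFiniteMeasure P] {U : Ω → T}
    (hU : ∀ t, MeasurableSet (U ⁻¹' {t})) (A : Set Ω) :
    P.real A = ∑ t, P.real (A ∩ U ⁻¹' {t}) := by
  rw [← measureReal_restrict_apply_univ, ← Set.preimage_univ (f := U), ← Finset.coe_univ,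
    ← sum_measureReal_preimage_singleton _ fun t _ => hU t]
  simp only [measureReal_restrict_apply (hU _), Set.inter_comm]

theorem entropy_pair_le_add [IsProbabilityMeasure P] {Y : Ω → S} {U : Ω → T}
    (hY : ∀ s, MeasurableSet (Y ⁻¹' {s})) (hU : ∀ t, MeasurableSet (U ⁻¹' {t})) :
    entropy P (fun ω => (Y ω, U ω)) ≤ entropy P Y + entropy P U := by
  have hfst (s : S) : P.real (Y ⁻¹' {s}) = ∑ t, P.real ((fun ω => (Y ω, U ω)) ⁻¹' {(s, t)}) := by
    simp only [← Set.singleton_prod_singleton, Set.mk_preimage_prod]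
    exact measureReal_eq_sum_inter_preimage P hU _
  have hsnd (t : T) : P.real (U ⁻¹' {t}) = ∑ s, P.real ((fun ω => (Y ω, U ω)) ⁻¹' {(s, t)}) := by
    simp only [← Set.singleton_prod_singleton, Set.mk_preimage_prod, Set.inter_comm (Y ⁻¹' _)]
    exact measureReal_eq_sum_inter_preimage P hY _
  have htotal : ∑ x, P.real ((fun ω => (Y ω, U ω)) ⁻¹' {x}) = 1 := by
    rw [Fintype.sum_prod_type, ← Finset.sum_congr rfl fun s _ => hfst s,
      sum_measureReal_preimage_singleton _ fun s _ => hY s]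
    simp
  have := sum_negMulLog_le_sum_negMulLog_fst_add_snd (fun _ => measureReal_nonneg) htotal
  simpa only [entropy, ← measureReal_def, hfst, hsnd] using this

end Entropy

theorem entropy_output_ge_entropy_sub_mutualInfo_general
    {Ω D R O : Type*} [MeasurableSpace Ω]
    [Fintype D] [MeasurableSpace D] [MeasurableSingletonClass D]
    [Fintype R] [MeasurableSpace R] [MeasurableSingletonClass R]
    [Fintype O]
    (P : Measure Ω) [IsProbabilityMeasure P]
    (X : Ω → D) (U : Ω → R) (hX : Measurable X) (hU : Measurable U)
    (g : D → R → O) (hg : ∀ u : R, Function.Injective (fun x => g x u)) :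
    entropy P (fun ω => g (X ω) (U ω)) ≥ entropy P X - mutualInfo P X U ∧
      ∀ C : ℝ, mutualInfo P X U ≤ C →
        entropy P (fun ω => g (X ω) (U ω)) ≥ entropy P X - C := by
  have hinj : Function.Injective fun p : D × R => (g p.1 p.2, p.2) := fun ⟨_, u⟩ ⟨_, _⟩ h => by
    obtain ⟨hx, rfl⟩ := Prod.ext_iff.mp h
    exact Prod.ext (hg u hx) rfl
  have hYU : entropy P (fun ω => (g (X ω) (U ω), U ω)) = entropy P (fun ω => (X ω, U ω)) :=
    entropy_comp_of_injective P (fun ω => (X ω, U ω)) hinj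
  have hY (o : O) : MeasurableSet ((fun ω => g (X ω) (U ω)) ⁻¹' {o}) :=
    hX.prodMk hU (Set.to_countable ((fun p : D × R => g p.1 p.2) ⁻¹' {o})).measurableSet
  have hsub := entropy_pair_le_add P hY fun u => hU (measurableSet_singleton u)
  have hmain : entropy P (fun ω => g (X ω) (U ω)) ≥ entropy P X - mutualInfo P X U := by
    rw [mutualInfo]
    linarith
  exact ⟨hmain, fun C hC => by linarith⟩

/-- Entropy lower bound on the regulated output:
`H(Y) ≥ H(X) − I(X : U)`, and if `I(X : U) ≤ C` then `H(Y) ≥ H(X) − C`. -/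
theorem entropy_output_ge_entropy_sub_mutualInfo
    {Ω D R O : Type*} [MeasurableSpace Ω]
    [Fintype D] [Nonempty D] [MeasurableSpace D] [MeasurableSingletonClass D]
    [Fintype R] [Nonempty R] [MeasurableSpace R] [MeasurableSingletonClass R]
    [Fintype O]
    (P : Measure Ω) [IsProbabilityMeasure P]
    (X : Ω → D) (U : Ω → R) (hX : Measurable X) (hU : Measurable U)
    (g : D → R → O) (hg : ∀ u : R, Function.Injective (fun x => g x u)) :
    entropy P (fun ω => g (X ω) (U ω)) ≥ entropy P X - mutualInfo P X U ∧
      ∀ C : ℝ, mutualInfo P X U ≤ C →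
        entropy P (fun ω => g (X ω) (U ω)) ≥ entropy P X - C :=
  entropy_output_ge_entropy_sub_mutualInfo_general P X U hX hU g hg
end

section
/- (Entropy form of complete control.) Let X : Ω → D and U : Ω → R be random variables on a probability space (Ω, P) taking values in finite nonempty types D and R, and let g : D → R → O map into a finite type O with x ↦ g x u injective for every u : R. If the output Y = (ω ↦ g (X ω) (U ω)) is almost surely constant (perfect regulation, H(Y) = 0), then H(X) ≤ H(U), and in particular H(X) ≤ Real.log (Nat.card R). -/
open MeasureTheory

/-- `negMulLog` is superadditive reversed: value at a sum is at most the sum of values,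
for nonnegative inputs. -/
lemma negMulLog_sum_le' {ι : Type*} (t : Finset ι) (f : ι → ℝ) (hf : ∀ i ∈ t, 0 ≤ f i) :
    Real.negMulLog (∑ i ∈ t, f i) ≤ ∑ i ∈ t, Real.negMulLog (f i) := by
  have hS : Real.negMulLog (∑ i ∈ t, f i)
      = ∑ i ∈ t, (-(f i) * Real.log (∑ j ∈ t, f j)) := by
    rw [Real.negMulLog, ← Finset.sum_neg_distrib, Finset.sum_mul]
  rw [hS]
  apply Finset.sum_le_sum
  intro i hi
  rcases eq_or_lt_of_le (hf i hi) with h0 | h0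
  · simp [← h0]
  · have hle : f i ≤ ∑ j ∈ t, f j := Finset.single_le_sum hf hi
    have : Real.log (f i) ≤ Real.log (∑ j ∈ t, f j) := Real.log_le_log h0 hle
    rw [Real.negMulLog, neg_mul, neg_mul, neg_le_neg_iff]
    exact mul_le_mul_of_nonneg_left this (hf i hi)

/-- Gibbs: entropy of a probability vector is at most `log` of the cardinality. -/
lemma sum_negMulLog_le_log_card {S : Type*} [Fintype S] [Nonempty S] (p : S → ℝ)
    (h0 : ∀ s, 0 ≤ p s) (h1 : ∑ s, p s = 1) :
    ∑ s, Real.negMulLog (p s) ≤ Real.log (Fintype.card S) := by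
  set n : ℝ := (Fintype.card S : ℝ) with hn
  have hnpos : 0 < n := by
    have := Fintype.card_pos (α := S); positivity
  have jensen := Real.concaveOn_negMulLog.le_map_sum (t := Finset.univ)
    (w := fun _ : S => 1 / n) (p := p)
    (fun i _ => by positivity)
    (by simp [Finset.sum_const, hn])
    (fun i _ => h0 i)
  simp only [smul_eq_mul, ← Finset.mul_sum, h1, mul_one] at jensen
  have hval : Real.negMulLog (1 / n) = (1 / n) * Real.log n := by
    rw [Real.negMulLog, Real.log_div one_ne_zero hnpos.ne', Real.log_one]
    ring
  rw [hval] at jensen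
  calc ∑ s, Real.negMulLog (p s) = n * ((1 / n) * ∑ s, Real.negMulLog (p s)) := by
        rw [← mul_assoc]; field_simp
    _ ≤ n * ((1 / n) * Real.log n) := by
        exact mul_le_mul_of_nonneg_left jensen hnpos.le
    _ = Real.log n := by field_simp

/-- Entropy form of complete control: if the regulated output
`Y = g (X ·) (U ·)` is almost surely constant, then `H(X) ≤ H(U)` and in
particular `H(X) ≤ log (Nat.card R)`. -/
theorem entropy_le_of_as_constant_output
    {Ω D R O : Type*} [MeasurableSpace Ω]
    [Fintype D] [Nonempty D] [MeasurableSpace D] [MeasurableSingletonClass D]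
    [Fintype R] [Nonempty R] [MeasurableSpace R] [MeasurableSingletonClass R]
    [Fintype O]
    (P : Measure Ω) [IsProbabilityMeasure P]
    (X : Ω → D) (U : Ω → R) (hX : Measurable X) (hU : Measurable U)
    (g : D → R → O) (hg : ∀ u : R, Function.Injective (fun x => g x u))
    (hconst : ∃ o : O, ∀ᵐ ω ∂P, g (X ω) (U ω) = o) :
    entropy P X ≤ entropy P U ∧ entropy P X ≤ Real.log (Nat.card R) := by
  obtain ⟨o, ho⟩ := hconst
  classical
  -- the a.s. decoding function
  set φ : R → D := fun u => if h : ∃ x : D, g x u = o then h.choose else Classical.arbitrary D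
    with hφ
  have hXφ : ∀ᵐ ω ∂P, X ω = φ (U ω) := by
    filter_upwards [ho] with ω hω
    have hex : ∃ x : D, g x (U ω) = o := ⟨X ω, hω⟩
    have : φ (U ω) = hex.choose := by rw [hφ]; simp [hex]
    rw [this]
    exact (hg (U ω) (hex.choose_spec.trans hω.symm)).symm
  -- entropies of a.e. equal variables agree
  have hEq : entropy P X = entropy P (fun ω => φ (U ω)) := by
    unfold entropy
    refine Finset.sum_congr rfl fun d _ => ?_
    have hm : P (X ⁻¹' {d}) = P ((fun ω => φ (U ω)) ⁻¹' {d}) := by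
      apply measure_congr
      filter_upwards [hXφ] with ω hω
      simp only [eq_iff_iff]
      show X ω ∈ ({d} : Set D) ↔ φ (U ω) ∈ ({d} : Set D)
      simp [hω]
    rw [hm]
  -- key: the fiber measure is a sum of singleton measures
  have hfiber : ∀ d : D, (P ((fun ω => φ (U ω)) ⁻¹' {d})).toReal
      = ∑ u ∈ Finset.univ.filter (fun u => φ u = d), (P (U ⁻¹' {u})).toReal := by
    intro d
    have hset : (fun ω => φ (U ω)) ⁻¹' {d}
        = U ⁻¹' ↑(Finset.univ.filter (fun u => φ u = d)) := by
      ext ω; simp [Set.mem_preimage]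
    rw [hset, ← sum_measure_preimage_singleton _ (fun u _ => hU (measurableSet_singleton u))]
    exact ENNReal.toReal_sum fun u _ => measure_ne_top P _
  -- data processing: H(φ ∘ U) ≤ H(U)
  have hDP : entropy P (fun ω => φ (U ω)) ≤ entropy P U := by
    unfold entropy
    calc ∑ d : D, Real.negMulLog (P ((fun ω => φ (U ω)) ⁻¹' {d})).toReal
        ≤ ∑ d : D, ∑ u ∈ Finset.univ.filter (fun u => φ u = d),
            Real.negMulLog (P (U ⁻¹' {u})).toReal := by
          refine Finset.sum_le_sum fun d _ => ?_
          rw [hfiber d]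
          exact negMulLog_sum_le' _ _ fun u _ => ENNReal.toReal_nonneg
      _ = ∑ u : R, Real.negMulLog (P (U ⁻¹' {u})).toReal := by
          rw [← Finset.sum_fiberwise Finset.univ φ
            (fun u => Real.negMulLog (P (U ⁻¹' {u})).toReal)]
  -- H(U) ≤ log |R|
  have hsum1 : ∑ u : R, (P (U ⁻¹' {u})).toReal = 1 := by
    rw [← ENNReal.toReal_sum fun u _ => measure_ne_top P _,
      sum_measure_preimage_singleton _ (fun u _ => hU (measurableSet_singleton u))]
    simp
  have hcard : entropy P U ≤ Real.log (Nat.card R) := by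
    rw [Nat.card_eq_fintype_card]
    exact sum_negMulLog_le_log_card _ (fun u => ENNReal.toReal_nonneg) hsum1
  have h1 : entropy P X ≤ entropy P U := hEq ▸ hDP
  exact ⟨h1, h1.trans hcard⟩
end
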